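/- Let G be a finite simple graph, let u be a vertex of G with a chosen neighbour w, and let v be a vertex distinct from both u and w. Then performing the X measurement at u followed by the Z measurement at v gives the same graph as performing the Z measurement at v followed by the X measurement at u: Z_v(X_u(G)) = X_u(Z_v(G)), where on the right-hand side the X measurement at u is taken with the same chosen neighbour w (which is still a neighbour of u in Z_v(G)). -/

import Mathlib

/-- A finite simple graph with an explicit vertex set inside an ambient type `α`. -/
structure FGraph (α : Type*) where
  verts : Set α
  Adj : α → α → Prop
  symm : ∀ {a b}, Adj a b → Adj b a
  loopless : ∀ a, ¬ Adj a a
  edge_mem : ∀ {a b}, Adj a b → a ∈ verts ∧ b ∈ verts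

namespace FGraph

variable {α : Type*}

/-- Local complementation at `v`: two distinct vertices are adjacent iff exactly one of
(adjacent in `G`) or (both neighbours of `v` in `G`) holds. -/
def LC (G : FGraph α) (v : α) : FGraph α where
  verts := G.verts
  Adj a b := a ≠ b ∧ Xor' (G.Adj a b) (G.Adj v a ∧ G.Adj v b)
  symm := by
    rintro a b ⟨hne, h⟩
    refine ⟨hne.symm, ?_⟩
    rcases h with ⟨h1, h2⟩ | ⟨h1, h2⟩
    · exact Or.inl ⟨G.symm h1, fun hx => h2 ⟨hx.2, hx.1⟩⟩
    · exact Or.inr ⟨⟨h1.2, h1.1⟩, fun hx => h2 (G.symm hx)⟩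
  loopless := fun a h => h.1 rfl
  edge_mem := by
    rintro a b ⟨hne, h⟩
    rcases h with ⟨h1, _⟩ | ⟨⟨ha, hb⟩, _⟩
    · exact G.edge_mem h1
    · exact ⟨(G.edge_mem ha).2, (G.edge_mem hb).2⟩

/-- Z measurement at `v`: delete the vertex `v` together with all incident edges. -/
def ZM (G : FGraph α) (v : α) : FGraph α where
  verts := G.verts \ {v}
  Adj a b := G.Adj a b ∧ a ≠ v ∧ b ≠ v
  symm := fun h => ⟨G.symm h.1, h.2.2, h.2.1⟩
  loopless := fun a h => G.loopless a h.1
  edge_mem := by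
    rintro a b ⟨h, ha, hb⟩
    exact ⟨⟨(G.edge_mem h).1, ha⟩, ⟨(G.edge_mem h).2, hb⟩⟩

/-- X measurement at `u` with chosen neighbour `w`:
`X_u(G) = LC_w(Z_u(LC_u(LC_w(G))))`. -/
def XM (G : FGraph α) (u w : α) : FGraph α :=
  ((((G.LC w).LC u).ZM u).LC w)

/-- Y measurement at `v`: `Y_v(G) = Z_v(LC_v(G))`. -/
def YM (G : FGraph α) (v : α) : FGraph α :=
  (G.LC v).ZM v

/-- `G` is a star graph with centre `c`. -/
def IsStar (G : FGraph α) (c : α) : Prop :=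
  c ∈ G.verts ∧
    ∀ a b, G.Adj a b ↔ (a ≠ b ∧ a ∈ G.verts ∧ b ∈ G.verts ∧ (a = c ∨ b = c))

/-- `G` is a complete graph on its vertex set. -/
def IsComplete (G : FGraph α) : Prop :=
  ∀ a b, G.Adj a b ↔ (a ≠ b ∧ a ∈ G.verts ∧ b ∈ G.verts)

/-- One step of local complementation or vertex deletion. -/
inductive Step : FGraph α → FGraph α → Prop
  | lc (G : FGraph α) (v : α) : Step G (G.LC v)
  | del (G : FGraph α) (v : α) : Step G (G.ZM v)

/-- `H` is a vertex-minor of `G`: `H` is obtained from `G` by a finite sequence of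
local complementations and vertex deletions. -/
def IsVertexMinor (H G : FGraph α) : Prop :=
  Relation.ReflTransGen Step G H

/-- One step of local complementation. -/
inductive LCStep : FGraph α → FGraph α → Prop
  | lc (G : FGraph α) (v : α) : LCStep G (G.LC v)

/-- `H` is obtained from `G` by a finite sequence of local complementations. -/
def LCReach (G H : FGraph α) : Prop :=
  Relation.ReflTransGen LCStep G H

end FGraph

/-! `X_u` is built from local complementations at `u`, `w` and the deletion of `u`. Deleting
`v` commutes with the deletion of `u`, and with a local complementation at any vertex `x ≠ v`,
because `LC_x` toggles only pairs of neighbours of `x` and such a pair avoids `v` after `v` is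
deleted. -/

namespace FGraph

variable {α : Type*}

@[ext]
theorem ext {G H : FGraph α} (hverts : G.verts = H.verts) (hadj : G.Adj = H.Adj) : G = H := by
  cases G; cases H; congr

theorem zm_zm_comm (G : FGraph α) (u v : α) : (G.ZM u).ZM v = (G.ZM v).ZM u := by
  ext a b
  · simp only [ZM, Set.mem_sdiff, Set.mem_singleton_iff]; tauto
  · simp only [ZM]; tauto

theorem zm_lc_comm (G : FGraph α) {x v : α} (hxv : x ≠ v) :
    (G.LC x).ZM v = (G.ZM v).LC x := by
  ext a b
  · rfl
  · simp only [ZM, LC]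
    by_cases hv : a = v ∨ b = v
    · rcases hv with rfl | rfl <;> simp <;> exact fun _ => (xor_self False).mp
    · push Not at hv
      simp [hv.1, hv.2, hxv]

end FGraph

theorem xMeasurement_comm_zMeasurement_general {α : Type*} (G : FGraph α) (u w v : α)
    (hvu : v ≠ u) (hvw : v ≠ w) :
    (G.XM u w).ZM v = (G.ZM v).XM u w := by
  rw [FGraph.XM, FGraph.XM, FGraph.zm_lc_comm _ hvw.symm, FGraph.zm_zm_comm,
    FGraph.zm_lc_comm _ hvu.symm, FGraph.zm_lc_comm _ hvw.symm]

/-- an X measurement at `u` (with chosen neighbour `w`) commutes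
with a Z measurement at a vertex `v` distinct from `u` and `w`. -/
theorem xMeasurement_comm_zMeasurement {α : Type*} (G : FGraph α) (u w v : α)
    (hw : G.Adj u w) (hvu : v ≠ u) (hvw : v ≠ w) :
    (G.XM u w).ZM v = (G.ZM v).XM u w :=
  xMeasurement_comm_zMeasurement_general G u w v hvu hvw
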